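/- arXiv:1210.6831 — 2 statements merged into one kernel-verified Lean document; each statement's English description precedes it below -/
import Mathlib

section
/- Let G be a simple graph, f a maximal null coloring of G, and u, v distinct vertices with f(u) = f(v) and d(u,v) <= 2, where d denotes graph distance. Let G' be the simple graph obtained from G by identifying u and v into a vertex uv, and let f' be the induced coloring of G' given by f'(uv) = f(u) and f'(x) = f(x) for all other vertices x. Then f' is a maximal null coloring of G'. -/
open SimpleGraph

/-- The number of steps of the walk `W` from a vertex labeled `i` to a vertex labeled `j`
(with respect to the labeling `f`). -/
def colorSteps {V C : Type} [DecidableEq C] {G : SimpleGraph V} (f : V → C)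
    {x y : V} (W : G.Walk x y) (i j : C) : ℕ :=
  W.darts.countP fun d => decide (f d.toProd.1 = i ∧ f d.toProd.2 = j)

/-- A coloring `f` of `G` is a null coloring if for every closed walk `W` and every ordered
pair `(i, j)` of distinct colors, the number of steps of `W` from a vertex colored `i` to a
vertex colored `j` equals the number of steps from a vertex colored `j` to one colored `i`. -/
def IsNullColoring {V C : Type} [DecidableEq C] (G : SimpleGraph V) (f : V → C) : Prop :=
  ∀ (x : V) (W : G.Walk x x) (i j : C), i ≠ j → colorSteps f W i j = colorSteps f W j i

/-- A null coloring is maximal if no null coloring of `G` has more color classes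
(the number of color classes of a coloring `g` is `(Set.range g).ncard`). -/
def IsMaximalNullColoring {V C : Type} [DecidableEq C] (G : SimpleGraph V) (f : V → C) : Prop :=
  IsNullColoring G f ∧
    ∀ (D : Type) [DecidableEq D] (g : V → D), IsNullColoring G g →
      (Set.range g).ncard ≤ (Set.range f).ncard

/-- The quotient graph `G/f`: vertices are the color classes of `f` (identified with the
range of `f`), two distinct classes being adjacent iff some edge of `G` joins them. -/
def quotientGraph {V C : Type} (G : SimpleGraph V) (f : V → C) :
    SimpleGraph (Set.range f) where
  Adj a b := a ≠ b ∧ ∃ x y : V, G.Adj x y ∧ f x = a.1 ∧ f y = b.1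
  symm := by
    constructor
    rintro a b ⟨hab, x, y, hxy, hx, hy⟩
    exact ⟨hab.symm, y, x, hxy.symm, hy, hx⟩
  loopless := by constructor; rintro a ⟨h, -⟩; exact h rfl

/-- The graph obtained from `G` by identifying the vertices `u` and `v` (the merged vertex
is represented by `u`; any loops created are discarded). -/
def identify {V : Type} (G : SimpleGraph V) (u v : V) : SimpleGraph {x : V // x ≠ v} where
  Adj a b := a ≠ b ∧ (G.Adj a.1 b.1 ∨ (a.1 = u ∧ G.Adj v b.1) ∨ (b.1 = u ∧ G.Adj a.1 v))
  symm := by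
    constructor
    rintro a b ⟨hab, h⟩
    refine ⟨hab.symm, ?_⟩
    rcases h with h | ⟨ha, hb⟩ | ⟨hb, ha⟩
    · exact Or.inl h.symm
    · exact Or.inr (Or.inr ⟨ha, hb.symm⟩)
    · exact Or.inr (Or.inl ⟨hb, ha.symm⟩)
  loopless := by constructor; rintro a ⟨h, -⟩; exact h rfl

/-- The quotient map `h : G → G'` corresponding to the identification of `u` and `v`. -/
def identifyMap {V : Type} [DecidableEq V] (u v : V) (huv : u ≠ v) : V → {x : V // x ≠ v} :=
  fun x => if hx : x = v then ⟨u, huv⟩ else ⟨x, hx⟩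

/-- The net number of steps of `W` from label `a` to label `b`:  steps from `a` to `b`
minus steps from `b` to `a`. -/
def netCount {V C : Type} [DecidableEq C] {G : SimpleGraph V} (f : V → C)
    {x y : V} (W : G.Walk x y) (a b : C) : ℤ :=
  (colorSteps f W a b : ℤ) - (colorSteps f W b a : ℤ)

/-! Net step counts are additive along walks, so a coloring is null iff every closed walk has
net count zero. A walk of length at most two between the equally colored `u` and `v` has net
count zero, so continuing each edge at the merged vertex along such a walk lifts closed walks
of `G'` to closed walks of `G` with the same net counts: `f'` is null. Conversely, a null
coloring of `G'` pulls back along the quotient map to a null coloring of `G` with as many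
classes, and `f'` has as many classes as `f`. -/

def stepNet {C : Type} [DecidableEq C] (a b i j : C) : ℤ :=
  (if a = i ∧ b = j then 1 else 0) - (if a = j ∧ b = i then 1 else 0)

section NetCount

variable {V C : Type} [DecidableEq C] {G : SimpleGraph V} {f : V → C}

lemma stepNet_self (a i j : C) : stepNet a a i j = 0 := by
  simp only [stepNet, and_comm, sub_self]

lemma stepNet_swap (a b i j : C) : stepNet b a i j = -stepNet a b i j := by
  simp only [stepNet, neg_sub, and_comm]

lemma netCount_nil {x : V} (i j : C) : netCount f (Walk.nil : G.Walk x x) i j = 0 := rfl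

lemma netCount_cons {x y z : V} (h : G.Adj x y) (W : G.Walk y z) (i j : C) :
    netCount f (Walk.cons h W) i j = stepNet (f x) (f y) i j + netCount f W i j := by
  simp only [netCount, colorSteps, stepNet, Walk.darts_cons, List.countP_cons, decide_eq_true_eq]
  push_cast
  ring

lemma netCount_append {x y z : V} (W₁ : G.Walk x y) (W₂ : G.Walk y z) (i j : C) :
    netCount f (W₁.append W₂) i j = netCount f W₁ i j + netCount f W₂ i j := by
  simp only [netCount, colorSteps, Walk.darts_append, List.countP_append]
  push_cast
  ring

lemma netCount_reverse {x y : V} (W : G.Walk x y) (i j : C) :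
    netCount f W.reverse i j = -netCount f W i j := by
  induction W with
  | nil => rfl
  | cons h W ih =>
    rw [Walk.reverse_cons, netCount_append, ih, netCount_cons, netCount_cons, netCount_nil,
      stepNet_swap]
    ring

lemma netCount_copy {x y x' y' : V} (W : G.Walk x y) (hx : x = x') (hy : y = y') (i j : C) :
    netCount f (W.copy hx hy) i j = netCount f W i j := by
  subst hx hy
  rfl

lemma netCount_self (f : V → C) {x y : V} (W : G.Walk x y) (i : C) : netCount f W i i = 0 :=
  sub_self _

lemma isNullColoring_iff_netCount_eq_zero :
    IsNullColoring G f ↔ ∀ (x : V) (W : G.Walk x x) (i j : C), netCount f W i j = 0 := by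
  refine ⟨fun hf x W i j => ?_,
    fun hf x W i j _ => by simpa [netCount, sub_eq_zero] using hf x W i j⟩
  obtain rfl | hij := eq_or_ne i j
  · exact netCount_self f W i
  · exact sub_eq_zero.mpr (congrArg _ (hf x W i j hij))

/-- The walk `x, w, y` steps from `f x` to `f w` and back, so it is balanced when `f x = f y`. -/
lemma netCount_eq_zero_of_length_le_two {x y : V} (hf : f x = f y) (W : G.Walk x y)
    (hW : W.length ≤ 2) (i j : C) : netCount f W i j = 0 := by
  match W, hW with
  | .nil, _ => rfl
  | .cons _ .nil, _ => rw [netCount_cons, netCount_nil, hf, stepNet_self, add_zero]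
  | .cons _ (.cons _ .nil), _ =>
    rw [netCount_cons, netCount_cons, netCount_nil, ← hf, stepNet_swap, add_zero, neg_add_cancel]

end NetCount

section Pullback

variable {V V' C : Type} [DecidableEq C] {G : SimpleGraph V} {H : SimpleGraph V'}

/-- Collapsed steps join equally colored vertices and so do not count. -/
lemma exists_walk_netCount_comp_eq (φ : V → V')
    (hφ : ∀ ⦃x y⦄, G.Adj x y → φ x ≠ φ y → H.Adj (φ x) (φ y)) (g : V' → C)
    {x y : V} (W : G.Walk x y) :
    ∃ W' : H.Walk (φ x) (φ y), ∀ i j, netCount (g ∘ φ) W i j = netCount g W' i j := by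
  induction W with
  | nil => exact ⟨Walk.nil, fun _ _ => rfl⟩
  | @cons x y z h W ih =>
    obtain ⟨W', hW'⟩ := ih
    by_cases hxy : φ x = φ y
    · refine ⟨W'.copy hxy.symm rfl, fun i j => ?_⟩
      rw [netCount_copy, netCount_cons, ← hW', Function.comp_apply, Function.comp_apply, hxy,
        stepNet_self, zero_add]
    · refine ⟨Walk.cons (hφ h hxy) W', fun i j => ?_⟩
      rw [netCount_cons, netCount_cons, hW']
      rfl

lemma IsNullColoring.comp {g : V' → C} (hg : IsNullColoring H g) (φ : V → V')
    (hφ : ∀ ⦃x y⦄, G.Adj x y → φ x ≠ φ y → H.Adj (φ x) (φ y)) :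
    IsNullColoring G (g ∘ φ) := by
  rw [isNullColoring_iff_netCount_eq_zero] at hg ⊢
  intro x W i j
  obtain ⟨W', hW'⟩ := exists_walk_netCount_comp_eq φ hφ g W
  rw [hW']
  exact hg _ W' i j

end Pullback

section Identify

variable {V : Type} {u v : V}

lemma identifyMap_surjective [DecidableEq V] (huv : u ≠ v) :
    Function.Surjective (identifyMap u v huv) :=
  fun x => ⟨x.1, by simp [identifyMap, x.2]⟩

lemma identifyMap_adj [DecidableEq V] {G : SimpleGraph V} (huv : u ≠ v) ⦃x y : V⦄
    (hxy : G.Adj x y) (hne : identifyMap u v huv x ≠ identifyMap u v huv y) :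
    (identify G u v).Adj (identifyMap u v huv x) (identifyMap u v huv y) := by
  refine ⟨hne, ?_⟩
  unfold identifyMap
  by_cases hx : x = v <;> by_cases hy : y = v
  · exact absurd (hx.trans hy.symm) hxy.ne
  · simpa [hx, hy] using Or.inr (Or.inl (hx ▸ hxy))
  · simpa [hx, hy] using Or.inr (Or.inr (hy ▸ hxy))
  · simpa [hx, hy] using Or.inl hxy

lemma comp_identifyMap [DecidableEq V] {C : Type} {f : V → C} (huv : u ≠ v) (hf : f u = f v) :
    (fun x : {x : V // x ≠ v} => f x.1) ∘ identifyMap u v huv = f := by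
  funext x
  by_cases hx : x = v <;> simp [identifyMap, hx, hf]

variable {C : Type} [DecidableEq C] {G : SimpleGraph V} {f : V → C}

/-- An edge of `identify G u v` through the merged vertex comes from an edge of `G` at `v`;
preceding or following it by a balanced walk `P` from `u` to `v` lifts it to `G`. -/
lemma identify_adj_exists_walk {P : G.Walk u v} (hP : ∀ i j, netCount f P i j = 0)
    (hf : f u = f v) {a b : {x : V // x ≠ v}} (h : (identify G u v).Adj a b) :
    ∃ W : G.Walk a.1 b.1, ∀ i j, netCount f W i j = stepNet (f a.1) (f b.1) i j := by
  obtain ⟨-, hab | ⟨hau, hvb⟩ | ⟨hbu, hav⟩⟩ := h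
  · exact ⟨Walk.cons hab Walk.nil, fun i j => by rw [netCount_cons, netCount_nil, add_zero]⟩
  · refine ⟨(P.append (Walk.cons hvb Walk.nil)).copy hau.symm rfl, fun i j => ?_⟩
    rw [netCount_copy, netCount_append, netCount_cons, netCount_nil, hP, hau, hf]
    ring
  · refine ⟨Walk.cons hav (P.reverse.copy rfl hbu.symm), fun i j => ?_⟩
    rw [netCount_cons, netCount_copy, netCount_reverse, hP, hbu, hf]
    ring

lemma identify_exists_walk_netCount_eq {P : G.Walk u v} (hP : ∀ i j, netCount f P i j = 0)
    (hf : f u = f v) {a b : {x : V // x ≠ v}} (W' : (identify G u v).Walk a b) :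
    ∃ W : G.Walk a.1 b.1, ∀ i j, netCount f W i j = netCount (fun x => f x.1) W' i j := by
  induction W' with
  | nil => exact ⟨Walk.nil, fun _ _ => rfl⟩
  | cons h W' ih =>
    obtain ⟨W, hW⟩ := ih
    obtain ⟨E, hE⟩ := identify_adj_exists_walk hP hf h
    exact ⟨E.append W, fun i j => by rw [netCount_append, netCount_cons, hE, hW]⟩

lemma IsNullColoring.identify (hnull : IsNullColoring G f) {P : G.Walk u v}
    (hP : ∀ i j, netCount f P i j = 0) (hf : f u = f v) :
    IsNullColoring (identify G u v) (fun x => f x.1) := by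
  rw [isNullColoring_iff_netCount_eq_zero] at hnull ⊢
  intro x W' i j
  obtain ⟨W, hW⟩ := identify_exists_walk_netCount_eq hP hf W'
  rw [← hW]
  exact hnull _ W i j

end Identify

theorem identify_maximal_null_coloring_general
    {V C : Type} [DecidableEq C]
    (G : SimpleGraph V) (f : V → C) (u v : V) (huv : u ≠ v)
    (hfuv : f u = f v) (hreach : G.Reachable u v) (hdist : G.dist u v ≤ 2)
    (hmax : IsMaximalNullColoring G f) :
    IsMaximalNullColoring (identify G u v) (fun x => f x.1) := by
  classical
  obtain ⟨P, hP⟩ := hreach.exists_walk_length_eq_dist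
  have hbalanced : ∀ i j, netCount f P i j = 0 :=
    netCount_eq_zero_of_length_le_two hfuv P (hP ▸ hdist)
  refine ⟨hmax.1.identify hbalanced hfuv, fun D _ g hg => ?_⟩
  have hsurj := identifyMap_surjective huv
  calc (Set.range g).ncard = (Set.range (g ∘ identifyMap u v huv)).ncard := by
        rw [hsurj.range_comp]
    _ ≤ (Set.range f).ncard := hmax.2 D _ (hg.comp _ (identifyMap_adj huv))
    _ = (Set.range fun x : {x : V // x ≠ v} => f x.1).ncard := by
        rw [← hsurj.range_comp, comp_identifyMap huv hfuv]

/-- If `f` is a maximal null coloring of `G`, `f(u) = f(v)` and `d(u,v) ≤ 2`,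
then the induced coloring `f'` of the graph `G'` obtained by identifying `u` and `v`
(given by `f'(uv) = f(u)` and `f'(x) = f(x)` otherwise) is a maximal null coloring of `G'`. -/
theorem identify_maximal_null_coloring
    {V C : Type} [Fintype V] [DecidableEq V] [DecidableEq C]
    (G : SimpleGraph V) (f : V → C) (u v : V) (huv : u ≠ v)
    (hfuv : f u = f v) (hreach : G.Reachable u v) (hdist : G.dist u v ≤ 2)
    (hmax : IsMaximalNullColoring G f) :
    IsMaximalNullColoring (identify G u v) (fun x => f x.1) :=
  identify_maximal_null_coloring_general G f u v huv hfuv hreach hdist hmax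
end

section
/- Let f be a null coloring of a simple graph G such that any two distinct vertices with the same color are at distance greater than 2. If w is a vertex of G such that no other vertex of G has the color f(w), then no cycle of G passes through w. -/
open SimpleGraph

namespace SimpleGraph

variable {V : Type} {G : SimpleGraph V}

lemma Walk.IsCycle.exists_eq_cons_concat {u : V} {c : G.Walk u u} (hc : c.IsCycle) :
    ∃ (a b : V) (ha : G.Adj u a) (q : G.Walk a b) (hb : G.Adj b u),
      c = .cons ha (q.concat hb) ∧ u ∉ q.support ∧ a ≠ b := by
  cases c with
  | nil => exact absurd hc Walk.not_isCycle_nil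
  | cons ha p =>
    obtain ⟨b, q, hb, rfl⟩ : ∃ (b : V) (q : G.Walk _ b) (hb : G.Adj b u), p = q.concat hb :=
      ⟨_, _, _, (p.concat_dropLast (p.adj_penultimate (Walk.not_nil_of_ne ha.ne'))).symm⟩
    obtain ⟨hpath, hedge⟩ := (Walk.cons_isCycle_iff _ ha).mp hc
    obtain ⟨hq, hu⟩ := (Walk.concat_isPath_iff hb).mp hpath
    refine ⟨_, b, ha, q, hb, rfl, hu, ?_⟩
    rintro rfl
    obtain rfl := Walk.eq_nil_iff_nil.mpr (Walk.isPath_iff_nil.mp hq)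
    simp [Sym2.eq_swap] at hedge

end SimpleGraph

section colorSteps

open Walk

variable {V C : Type} [DecidableEq C] {G : SimpleGraph V} (f : V → C) {u v w : V}

@[simp]
lemma colorSteps_cons (h : G.Adj u v) (p : G.Walk v w) (i j : C) :
    colorSteps f (cons h p) i j = (if f u = i ∧ f v = j then 1 else 0) + colorSteps f p i j := by
  simp [colorSteps, List.countP_cons, add_comm]

@[simp]
lemma colorSteps_concat (p : G.Walk u v) (h : G.Adj v w) (i j : C) :
    colorSteps f (p.concat h) i j = colorSteps f p i j + if f v = i ∧ f w = j then 1 else 0 := by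
  simp [colorSteps, darts_concat, List.countP_append]

variable {f}

lemma colorSteps_eq_zero_of_forall_ne_left {p : G.Walk u v} {i : C}
    (hp : ∀ x ∈ p.support, f x ≠ i) (j : C) : colorSteps f p i j = 0 :=
  List.countP_eq_zero.mpr fun _ hd h =>
    hp _ (dart_fst_mem_support_of_mem_darts _ hd) (of_decide_eq_true h).1

lemma colorSteps_eq_zero_of_forall_ne_right {p : G.Walk u v} {j : C}
    (hp : ∀ x ∈ p.support, f x ≠ j) (i : C) : colorSteps f p i j = 0 :=
  List.countP_eq_zero.mpr fun _ hd h =>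
    hp _ (dart_snd_mem_support_of_mem_darts _ hd) (of_decide_eq_true h).2

end colorSteps

theorem IsNullColoring.not_isCycle_of_unique_color {V C : Type} [DecidableEq C]
    {G : SimpleGraph V} {f : V → C} (hf : IsNullColoring G f) {w : V}
    (hw : ∀ x, x ≠ w → f x ≠ f w) (hinj : Set.InjOn f (G.neighborSet w)) (c : G.Walk w w) :
    ¬ c.IsCycle := by
  intro hc
  obtain ⟨a, b, ha, q, hb, rfl, hwq, hab⟩ := hc.exists_eq_cons_concat
  have hfq : ∀ x ∈ q.support, f x ≠ f w := fun x hx => hw x (ne_of_mem_of_not_mem hx hwq)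
  have hfa : f a ≠ f w := hw a ha.ne'
  have hfb : f b ≠ f w := hw b hb.ne
  have hfab : f a ≠ f b := fun h => hab (hinj ha hb.symm h)
  -- `w → a` is the only step leaving the color `f w`, and the only step into it starts at `b`,
  -- whose color is not `f a`.
  have := hf w (.cons ha (q.concat hb)) (f w) (f a) hfa.symm
  simp [colorSteps_eq_zero_of_forall_ne_left hfq, colorSteps_eq_zero_of_forall_ne_right hfq,
    hfa, hfb, hfab.symm] at this

/-- Let `f` be a null coloring of `G` in which any two distinct vertices with
the same color are at distance greater than 2 (not adjacent and with no common neighbor).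
If no vertex other than `w` has the color `f(w)`, then no cycle of `G` passes through `w`. -/
theorem unique_color_not_on_cycle
    {V C : Type} [DecidableEq C]
    (G : SimpleGraph V) (f : V → C) (hf : IsNullColoring G f)
    (hfar : ∀ x y : V, x ≠ y → f x = f y →
      ¬ G.Adj x y ∧ ∀ z : V, ¬ (G.Adj x z ∧ G.Adj z y))
    (w : V) (hw : ∀ x : V, x ≠ w → f x ≠ f w) :
    ∀ (x : V) (W : G.Walk x x), W.IsCycle → w ∉ W.support := by
  classical
  intro x W hW hwW
  refine hf.not_isCycle_of_unique_color hw (fun a ha b hb hfab => ?_) _ (hW.rotate hwW)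
  by_contra hab
  exact (hfar a b hab hfab).2 w ⟨ha.symm, hb⟩
end
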